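/- arXiv:2501.04271 — 2 statements merged into one kernel-verified Lean document; each statement's English description precedes it below -/
import Mathlib

section
/- Let v(s) = Σ_{j≥1} a_j cos(j s) with Σ j^{2k} a_j² < ∞ for some k ≥ 3. Then the operator L defined by L v (s) = (1/(4π)) ∫₀^{2π} log(1/(4 sin²(t/2))) [v(s−t) sin t + (v'(s−t) − v'(s)) cos t] dt − (1/(4π)) ∫₀^{2π} sin(t) v(s−t) dt satisfies L v (s) = Σ_{j≥1} ((j−1)/2) a_j sin(j s). -/
/-!
The kernel `log (1 / (4 sin² (t/2)))` is symmetric about `π`, so it annihilates `sin (m t)`, and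
`∫₀^{2π} log (1 / (4 sin² (t/2))) cos (m t) dt = 2π/m` for `m ≥ 1`: integrating by parts against
`sin (m t)` leaves `∫ cot (t/2) sin (m t)`, and `cot (t/2) sin (m t)` is a Dirichlet-type
trigonometric polynomial of mean `1`. For a single mode `α cos ((j+1) s)` of `v` both integrands
are trigonometric polynomials in `t` (the first one times the kernel), which gives
`(j/2) α sin ((j+1) s)`. Since `∑ (j+1) |a_{j+1}| < ∞` (AM-GM against the `H^k` weight), the
series for `v` and `v'` are uniformly dominated, and both integrals commute with the sums.
-/

namespace ContourDynamics

open Real MeasureTheory Set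

lemma integral_cos_nat_mul (m : ℕ) :
    ∫ t in (0:ℝ)..2 * π, cos (m * t) = if m = 0 then 2 * π else 0 := by
  split_ifs with hm
  · simp [hm]
  · rw [intervalIntegral.integral_comp_mul_left (fun t => cos t) (Nat.cast_ne_zero.2 hm),
      integral_cos, show (m:ℝ) * (2 * π) = (2 * m : ℕ) * π by push_cast; ring, sin_nat_mul_pi]
    simp

lemma integral_sin_nat_mul (m : ℕ) :
    ∫ t in (0:ℝ)..2 * π, sin (m * t) = 0 := by
  rcases eq_or_ne m 0 with rfl | hm
  · simp
  · rw [intervalIntegral.integral_comp_mul_left (fun t => sin t) (Nat.cast_ne_zero.2 hm),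
      integral_sin]
    simp [cos_nat_mul_two_pi]

lemma sin_nat_mul_eq_two_mul_sin_half_mul_sum (n : ℕ) (t : ℝ) :
    sin (n * t) = 2 * sin (t / 2) * ∑ k ∈ Finset.range n, cos ((k + 1 / 2) * t) := by
  induction n with
  | zero => simp
  | succ n ih =>
    rw [Finset.sum_range_succ, mul_add, ← ih, two_mul_sin_mul_cos,
      show t / 2 - (n + 1 / 2) * t = -(n * t) by ring, sin_neg]
    push_cast
    ring_nf

lemma two_mul_cos_half_mul_sum_eq (n : ℕ) (t : ℝ) :
    2 * cos (t / 2) * ∑ k ∈ Finset.range n, cos ((k + 1 / 2) * t)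
      = ∑ k ∈ Finset.range n, (cos ((k + 1 : ℕ) * t) + cos (k * t)) := by
  rw [Finset.mul_sum]
  refine Finset.sum_congr rfl fun k _ => ?_
  rw [two_mul_cos_mul_cos, show t / 2 - (k + 1 / 2) * t = -(k * t) by ring, cos_neg]
  push_cast
  ring_nf

lemma integral_two_mul_cos_half_mul_sum {n : ℕ} (hn : n ≠ 0) :
    ∫ t in (0:ℝ)..2 * π, 2 * cos (t / 2) * ∑ k ∈ Finset.range n, cos ((k + 1 / 2) * t)
      = 2 * π := by
  simp_rw [two_mul_cos_half_mul_sum_eq]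
  rw [intervalIntegral.integral_finsetSum fun k _ =>
    (by fun_prop : Continuous _).intervalIntegrable _ _]
  have hk (k : ℕ) : ∫ t in (0:ℝ)..2 * π, (cos ((k + 1 : ℕ) * t) + cos (k * t))
      = if k = 0 then 2 * π else 0 := by
    rw [intervalIntegral.integral_add ((by fun_prop : Continuous _).intervalIntegrable _ _)
      ((by fun_prop : Continuous _).intervalIntegrable _ _), integral_cos_nat_mul,
      integral_cos_nat_mul, if_neg k.succ_ne_zero, zero_add]
  rw [Finset.sum_congr rfl fun k _ => hk k]
  simp [Nat.pos_of_ne_zero hn]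

noncomputable def logKernel (t : ℝ) : ℝ := log (1 / (4 * sin (t / 2) ^ 2))

lemma logKernel_eq_neg_log (t : ℝ) : logKernel t = -log (4 * sin (t / 2) ^ 2) := by
  rw [logKernel, one_div, log_inv]

lemma intervalIntegrable_logKernel (a b : ℝ) : IntervalIntegrable logKernel volume a b :=
  MeromorphicOn.intervalIntegrable_log (f := fun t => 1 / (4 * sin (t / 2) ^ 2))
    ((MeromorphicOn.const 1).fun_div (AnalyticOnNhd.meromorphicOn fun _ _ => by fun_prop))

lemma intervalIntegrable_logKernel_mul {f : ℝ → ℝ} (hf : Continuous f) (a b : ℝ) :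
    IntervalIntegrable (fun t => logKernel t * f t) volume a b :=
  (intervalIntegrable_logKernel a b).mul_continuousOn hf.continuousOn

lemma logKernel_two_pi_sub (t : ℝ) : logKernel (2 * π - t) = logKernel t := by
  rw [logKernel, logKernel, show (2 * π - t) / 2 = π - t / 2 by ring, sin_pi_sub]

lemma integral_logKernel_mul_sin (m : ℕ) :
    ∫ t in (0:ℝ)..2 * π, logKernel t * sin (m * t) = 0 := by
  have h := intervalIntegral.integral_comp_sub_left (fun t => logKernel t * sin (m * t))
    (a := 0) (b := 2 * π) (2 * π)
  simp only [sub_self, sub_zero, logKernel_two_pi_sub, mul_sub, mul_neg,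
    fun t => sin_nat_mul_two_pi_sub (m * t) m, intervalIntegral.integral_neg] at h
  linarith

lemma hasDerivAt_logKernel {t : ℝ} (ht : sin (t / 2) ≠ 0) :
    HasDerivAt logKernel (-(cos (t / 2) / sin (t / 2))) t := by
  rw [show logKernel = fun t => -log (4 * sin (t / 2) ^ 2) from funext logKernel_eq_neg_log]
  refine ((((hasDerivAt_id' t).div_const 2).sin.fun_pow 2).const_mul 4
    |>.log (mul_ne_zero four_ne_zero (pow_ne_zero 2 ht)) |>.neg).congr_deriv ?_
  field_simp
  ring

/-- `sin (n * t)` vanishes to first order where `sin (t / 2)` does, and `x * log x → 0`. -/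
lemma continuous_logKernel_mul_sin (n : ℕ) : Continuous fun t => logKernel t * sin (n * t) := by
  have h : (fun t => logKernel t * sin (n * t)) = fun t =>
      -(log 4 * sin (t / 2) + 2 * (sin (t / 2) * log (sin (t / 2))))
        * (2 * ∑ k ∈ Finset.range n, cos ((k + 1 / 2) * t)) := by
    funext t
    rw [sin_nat_mul_eq_two_mul_sin_half_mul_sum]
    rcases eq_or_ne (sin (t / 2)) 0 with h | h
    · simp [h]
    · rw [logKernel_eq_neg_log, log_mul (by norm_num) (pow_ne_zero 2 h), log_pow]
      push_cast
      ring
  rw [h]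
  fun_prop

lemma integral_logKernel_mul_cos {n : ℕ} (hn : n ≠ 0) :
    ∫ t in (0:ℝ)..2 * π, logKernel t * cos (n * t) = 2 * π / n := by
  have hderiv : ∀ t ∈ Ioo 0 (2 * π), HasDerivAt (fun t => logKernel t * sin (n * t))
      (-(2 * cos (t / 2) * ∑ k ∈ Finset.range n, cos ((k + 1 / 2) * t))
        + n * (logKernel t * cos (n * t))) t := by
    intro t ht
    have hs : sin (t / 2) ≠ 0 :=
      (sin_pos_of_pos_of_lt_pi (by linarith [ht.1]) (by linarith [ht.2])).ne'
    refine ((hasDerivAt_logKernel hs).mul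
      (((hasDerivAt_id' t).const_mul (n : ℝ)).sin)).congr_deriv ?_
    rw [sin_nat_mul_eq_two_mul_sin_half_mul_sum]
    field_simp
  have hcot :
      Continuous fun t => -(2 * cos (t / 2) * ∑ k ∈ Finset.range n, cos ((k + 1 / 2) * t)) := by
    fun_prop
  have hint : IntervalIntegrable (fun t => n * (logKernel t * cos (n * t))) volume 0 (2 * π) :=
    (intervalIntegrable_logKernel_mul (by fun_prop) _ _).const_mul _
  have hftc := intervalIntegral.integral_eq_sub_of_hasDerivAt_of_le two_pi_pos.le
    (continuous_logKernel_mul_sin n).continuousOn hderiv ((hcot.intervalIntegrable _ _).add hint)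
  rw [intervalIntegral.integral_add (hcot.intervalIntegrable _ _) hint,
    intervalIntegral.integral_neg, intervalIntegral.integral_const_mul,
    integral_two_mul_cos_half_mul_sum hn] at hftc
  have hn' : (n : ℝ) ≠ 0 := Nat.cast_ne_zero.2 hn
  have hsin : sin (n * (2 * π)) = 0 := by simpa using sin_nat_mul_two_pi_sub 0 n
  simp only [hsin, mul_zero, sin_zero, sub_zero] at hftc
  field_simp
  linarith

lemma integral_logKernel_mul_sin_sub {m : ℕ} (hm : m ≠ 0) (φ : ℝ) :
    ∫ t in (0:ℝ)..2 * π, logKernel t * sin (φ - m * t) = 2 * π / m * sin φ := by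
  simp_rw [sin_sub, mul_sub, mul_left_comm (logKernel _)]
  rw [intervalIntegral.integral_sub
      ((intervalIntegrable_logKernel_mul (by fun_prop) _ _).const_mul _)
      ((intervalIntegrable_logKernel_mul (by fun_prop) _ _).const_mul _),
    intervalIntegral.integral_const_mul, intervalIntegral.integral_const_mul,
    integral_logKernel_mul_cos hm, integral_logKernel_mul_sin]
  ring

lemma integral_sin_sub_nat_mul (m : ℕ) (φ : ℝ) :
    ∫ t in (0:ℝ)..2 * π, sin (φ - m * t) = if m = 0 then 2 * π * sin φ else 0 := by
  simp_rw [sin_sub]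
  rw [intervalIntegral.integral_sub ((by fun_prop : Continuous _).intervalIntegrable _ _)
      ((by fun_prop : Continuous _).intervalIntegrable _ _),
    intervalIntegral.integral_const_mul, intervalIntegral.integral_const_mul,
    integral_cos_nat_mul, integral_sin_nat_mul]
  split_ifs <;> ring

/-- For `m = 0` the kernel term drops out and the plain integral supplies the value: this is how
the `sin t * v (s - t)` term compensates for the kernel having no zero mode. -/
lemma nat_mul_integral_logKernel_mul_sin_sub_add (m : ℕ) (φ : ℝ) :
    m * (∫ t in (0:ℝ)..2 * π, logKernel t * sin (φ - m * t))
      + ∫ t in (0:ℝ)..2 * π, sin (φ - m * t) = 2 * π * sin φ := by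
  rw [integral_sin_sub_nat_mul]
  rcases eq_or_ne m 0 with rfl | hm
  · simp
  · rw [integral_logKernel_mul_sin_sub hm, if_neg hm, add_zero]
    field_simp [Nat.cast_ne_zero.2 hm]

noncomputable def linearization (v v' : ℝ → ℝ) (s : ℝ) : ℝ :=
  (1 / (4 * π)) * (∫ t in (0:ℝ)..(2 * π),
      logKernel t * (v (s - t) * sin t + (v' (s - t) - v' s) * cos t))
    - (1 / (4 * π)) * (∫ t in (0:ℝ)..(2 * π), sin t * v (s - t))

lemma cos_mode_bracket_eq (j : ℕ) (α s t : ℝ) :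
    α * cos ((j + 1) * (s - t)) * sin t
        + (-((j + 1) * α) * sin ((j + 1) * (s - t)) - -((j + 1) * α) * sin ((j + 1) * s)) * cos t
      = α * ((j + 1) * sin ((j + 1) * s) * cos t
          - (j + 2 : ℕ) / 2 * sin ((j + 1) * s - (j + 2 : ℕ) * t)
          - j / 2 * sin ((j + 1) * s - j * t)) := by
  push_cast
  rw [show ((j : ℝ) + 1) * s - (j + 2) * t = (j + 1) * (s - t) - t by ring,
    show ((j : ℝ) + 1) * s - j * t = (j + 1) * (s - t) + t by ring, sin_add, sin_sub]
  ring

lemma sin_mul_cos_mode_eq (j : ℕ) (α s t : ℝ) :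
    sin t * (α * cos ((j + 1) * (s - t)))
      = α / 2 * (sin ((j + 1) * s - j * t) - sin ((j + 1) * s - (j + 2 : ℕ) * t)) := by
  push_cast
  rw [show ((j : ℝ) + 1) * s - (j + 2) * t = (j + 1) * (s - t) - t by ring,
    show ((j : ℝ) + 1) * s - j * t = (j + 1) * (s - t) + t by ring, sin_add, sin_sub]
  ring

lemma linearization_cos_mode (j : ℕ) (α s : ℝ) :
    linearization (fun x => α * cos ((j + 1) * x)) (fun x => -((j + 1) * α) * sin ((j + 1) * x)) s
      = j / 2 * α * sin ((j + 1) * s) := by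
  simp only [linearization]
  simp_rw [cos_mode_bracket_eq, sin_mul_cos_mode_eq, mul_left_comm (logKernel _) α]
  rw [intervalIntegral.integral_const_mul]
  simp_rw [mul_sub, mul_left_comm (logKernel _)]
  have hW (c : ℝ) {f : ℝ → ℝ} (hf : Continuous f) :
      IntervalIntegrable (fun t => c * (logKernel t * f t)) volume 0 (2 * π) :=
    (intervalIntegrable_logKernel_mul hf _ _).const_mul c
  rw [intervalIntegral.integral_sub ((hW _ (by fun_prop)).sub (hW _ (by fun_prop)))
      (hW _ (by fun_prop)),
    intervalIntegral.integral_sub (hW _ (by fun_prop)) (hW _ (by fun_prop)),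
    intervalIntegral.integral_sub ((by fun_prop : Continuous _).intervalIntegrable _ _)
      ((by fun_prop : Continuous _).intervalIntegrable _ _)]
  simp only [intervalIntegral.integral_const_mul]
  have hcos : ∫ t in (0:ℝ)..2 * π, logKernel t * cos t = 2 * π := by
    simpa using integral_logKernel_mul_cos one_ne_zero
  rw [hcos, integral_logKernel_mul_sin_sub (Nat.succ_ne_zero _),
    integral_sin_sub_nat_mul (j + 2), if_neg (Nat.succ_ne_zero _),
    eq_sub_of_add_eq' (nat_mul_integral_logKernel_mul_sin_sub_add j _)]
  push_cast
  field_simp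
  ring

lemma summable_mul_abs_of_summable_pow_mul_sq {k : ℕ} (hk : 2 ≤ k) {b : ℕ → ℝ}
    (hb : Summable fun j : ℕ => ((j : ℝ) + 1) ^ (2 * k) * b j ^ 2) :
    Summable fun j : ℕ => ((j : ℝ) + 1) * |b j| := by
  have hp : Summable fun j : ℕ => 1 / ((j : ℝ) + 1) ^ 2 := by
    simpa using (summable_nat_add_iff 1).2 (Real.summable_one_div_nat_pow.2 one_lt_two)
  refine Summable.of_nonneg_of_le (fun j => by positivity) (fun j => ?_) ((hb.add hp).div_const 2)
  set N : ℝ := (j : ℝ) + 1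
  have hN : 1 ≤ N := le_add_of_nonneg_left j.cast_nonneg
  have hsplit : N * |b j| = (N ^ k * |b j|) * (1 / N ^ (k - 1)) := by
    rw [← pow_sub_one_mul (by omega : k ≠ 0)]
    field_simp
  have hsq : (N ^ k * |b j|) ^ 2 = N ^ (2 * k) * b j ^ 2 := by
    rw [mul_pow, ← pow_mul, sq_abs, mul_comm k 2]
  have hsmall : (1 / N ^ (k - 1)) ^ 2 ≤ 1 / N ^ 2 := by
    rw [div_pow, one_pow, ← pow_mul]
    exact one_div_le_one_div_of_le (by positivity) (pow_le_pow_right₀ hN (by omega))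
  have := two_mul_le_add_sq (N ^ k * |b j|) (1 / N ^ (k - 1))
  rw [hsplit]
  linarith

lemma hasSum_integral_mul_tsum {w : ℝ → ℝ} {a b : ℝ} (hw : IntervalIntegrable w volume a b)
    {F : ℕ → ℝ → ℝ} {c : ℕ → ℝ} (hF : ∀ j, Continuous (F j)) (hFc : ∀ j t, |F j t| ≤ c j)
    (hc : Summable c) :
    HasSum (fun j => ∫ t in a..b, w t * F j t) (∫ t in a..b, w t * ∑' j, F j t) := by
  refine intervalIntegral.hasSum_integral_of_dominated_convergence (fun j t => c j * |w t|)
    (fun j => hw.def'.aestronglyMeasurable.mul (hF j).aestronglyMeasurable)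
    (fun j => ae_of_all _ fun t _ => ?_) (ae_of_all _ fun t _ => hc.mul_right _) ?_
    (ae_of_all _ fun t _ => (Summable.of_norm_bounded hc fun j => hFc j t).hasSum.mul_left (w t))
  · rw [norm_mul, Real.norm_eq_abs, Real.norm_eq_abs, mul_comm]
    exact mul_le_mul_of_nonneg_right (hFc j t) (abs_nonneg _)
  · simp_rw [tsum_mul_right]
    exact hw.abs.const_mul _

lemma hasSum_linearization {F G : ℕ → ℝ → ℝ} {c : ℕ → ℝ} (hF : ∀ j, Continuous (F j))
    (hG : ∀ j, Continuous (G j)) (hFc : ∀ j x, |F j x| ≤ c j) (hGc : ∀ j x, |G j x| ≤ c j)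
    (hc : Summable c) (s : ℝ) :
    HasSum (fun j => linearization (F j) (G j) s)
      (linearization (fun x => ∑' j, F j x) (fun x => ∑' j, G j x) s) := by
  have hsumF (x : ℝ) : HasSum (fun j => F j x) (∑' j, F j x) :=
    (Summable.of_norm_bounded hc fun j => hFc j x).hasSum
  have hsumG (x : ℝ) : HasSum (fun j => G j x) (∑' j, G j x) :=
    (Summable.of_norm_bounded hc fun j => hGc j x).hasSum
  have hbound (j : ℕ) (t : ℝ) :
      |F j (s - t) * sin t + (G j (s - t) - G j s) * cos t| ≤ 3 * c j := by
    have hc0 : 0 ≤ c j := (abs_nonneg _).trans (hFc j 0)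
    calc _ ≤ |F j (s - t)| * |sin t| + |G j (s - t) - G j s| * |cos t| := by
          rw [← abs_mul, ← abs_mul]
          exact abs_add_le _ _
      _ ≤ c j * 1 + (c j + c j) * 1 :=
          add_le_add (mul_le_mul (hFc _ _) (abs_sin_le_one t) (abs_nonneg _) hc0)
            (mul_le_mul ((abs_sub _ _).trans (add_le_add (hGc _ _) (hGc _ _))) (abs_cos_le_one t)
              (abs_nonneg _) (by linarith))
      _ = 3 * c j := by ring
  have hbracket := hasSum_integral_mul_tsum (intervalIntegrable_logKernel 0 (2 * π))
    (fun j => by fun_prop) hbound (hc.mul_left 3)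
  have hsin := hasSum_integral_mul_tsum (continuous_sin.intervalIntegrable 0 (2 * π))
    (fun j => (hF j).comp (continuous_sub_left s)) (fun j t => hFc j (s - t)) hc
  have hpoint (t : ℝ) : ∑' j, (F j (s - t) * sin t + (G j (s - t) - G j s) * cos t)
      = (∑' j, F j (s - t)) * sin t + ((∑' j, G j (s - t)) - ∑' j, G j s) * cos t :=
    (((hsumF _).mul_right _).add (((hsumG _).sub (hsumG _)).mul_right _)).tsum_eq
  simp_rw [hpoint] at hbracket
  exact (hbracket.mul_left _).sub (hsin.mul_left _)

end ContourDynamics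

open Real in
/-- Linearization of the contour-dynamics functional at the unit disc:
if v(s) = Σ_{j≥1} a_j cos(js) (with H^k coefficients, k ≥ 3), then
L v (s) = Σ_{j≥1} ((j−1)/2) a_j sin(js). -/
theorem linearization_unit_disc (k : ℕ) (hk : 3 ≤ k) (a : ℕ → ℝ)
    (ha : Summable (fun j : ℕ => ((j : ℝ) + 1) ^ (2 * k) * (a (j + 1)) ^ 2))
    (v : ℝ → ℝ)
    (hv : ∀ s, v s = ∑' j : ℕ, a (j + 1) * Real.cos (((j : ℝ) + 1) * s))
    (hv' : ∀ s, deriv v s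
      = ∑' j : ℕ, -(((j : ℝ) + 1) * a (j + 1)) * Real.sin (((j : ℝ) + 1) * s))
    (s : ℝ) :
    (1 / (4 * π)) * (∫ t in (0:ℝ)..(2 * π),
        Real.log (1 / (4 * Real.sin (t / 2) ^ 2)) *
          (v (s - t) * Real.sin t + (deriv v (s - t) - deriv v s) * Real.cos t))
      - (1 / (4 * π)) * (∫ t in (0:ℝ)..(2 * π), Real.sin t * v (s - t))
    = ∑' j : ℕ, ((j : ℝ) / 2) * a (j + 1) * Real.sin (((j : ℝ) + 1) * s) := by
  have hc := ContourDynamics.summable_mul_abs_of_summable_pow_mul_sq (by omega : 2 ≤ k) ha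
  have hcos (j : ℕ) (x : ℝ) :
      |a (j + 1) * Real.cos ((j + 1) * x)| ≤ (j + 1) * |a (j + 1)| := by
    rw [abs_mul]
    exact (mul_le_of_le_one_right (abs_nonneg _) (Real.abs_cos_le_one _)).trans
      (le_mul_of_one_le_left (abs_nonneg _) (le_add_of_nonneg_left j.cast_nonneg))
  have hsin (j : ℕ) (x : ℝ) :
      |-((j + 1) * a (j + 1)) * Real.sin ((j + 1) * x)| ≤ (j + 1) * |a (j + 1)| := by
    rw [abs_mul, abs_neg, abs_mul, abs_of_nonneg (by positivity : (0 : ℝ) ≤ j + 1)]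
    exact mul_le_of_le_one_right (by positivity) (Real.abs_sin_le_one _)
  have hmodes := ContourDynamics.hasSum_linearization (fun j => by fun_prop)
    (fun j => by fun_prop) hcos hsin hc s
  change ContourDynamics.linearization v (deriv v) s = _
  rw [funext hv', funext hv, ← hmodes.tsum_eq]
  exact tsum_congr fun j => ContourDynamics.linearization_cos_mode j (a (j + 1)) s
end

section
/- Let N = 2M be even, r > 0, 0 < ρ < 1, and ν_n = r e^{2πi(n−1)/N} for n = 1,…,N. Then Σ_{n=2}^{N} K(ν_1/ν_n) = (2M−1)/2, where K is the logarithmic derivative of the P-function on the annulus. -/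
/-- The K-function: logarithmic derivative of the P-function, as a series. -/
noncomputable def Kfun (ρ : ℝ) (ζ : ℂ) : ℂ :=
  ζ / (ζ - 1) + ∑' n : ℕ,
    (-((ρ : ℂ) ^ (n + 1) * ζ) / (1 - (ρ : ℂ) ^ (n + 1) * ζ)
      + ((ρ : ℂ) ^ (n + 1) / ζ) / (1 - (ρ : ℂ) ^ (n + 1) / ζ))

lemma Kfun_add_inv (ρ : ℝ) (ζ : ℂ) (h0 : ζ ≠ 0) (h1 : ζ ≠ 1) :
    Kfun ρ ζ + Kfun ρ ζ⁻¹ = 1 := by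
  unfold Kfun
  have hterm : ∀ n : ℕ,
      (-((ρ : ℂ) ^ (n + 1) * ζ⁻¹) / (1 - (ρ : ℂ) ^ (n + 1) * ζ⁻¹)
        + ((ρ : ℂ) ^ (n + 1) / ζ⁻¹) / (1 - (ρ : ℂ) ^ (n + 1) / ζ⁻¹))
      = -((-((ρ : ℂ) ^ (n + 1) * ζ) / (1 - (ρ : ℂ) ^ (n + 1) * ζ)
        + ((ρ : ℂ) ^ (n + 1) / ζ) / (1 - (ρ : ℂ) ^ (n + 1) / ζ))) := by
    intro n
    have e1 : (ρ : ℂ) ^ (n + 1) * ζ⁻¹ = (ρ : ℂ) ^ (n + 1) / ζ :=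
      (div_eq_mul_inv _ _).symm
    have e2 : (ρ : ℂ) ^ (n + 1) / ζ⁻¹ = (ρ : ℂ) ^ (n + 1) * ζ := by
      rw [div_eq_mul_inv, inv_inv]
    rw [e1, e2]
    ring
  have hts : (∑' n : ℕ,
      (-((ρ : ℂ) ^ (n + 1) * ζ⁻¹) / (1 - (ρ : ℂ) ^ (n + 1) * ζ⁻¹)
        + ((ρ : ℂ) ^ (n + 1) / ζ⁻¹) / (1 - (ρ : ℂ) ^ (n + 1) / ζ⁻¹)))
      = -(∑' n : ℕ,
      (-((ρ : ℂ) ^ (n + 1) * ζ) / (1 - (ρ : ℂ) ^ (n + 1) * ζ)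
        + ((ρ : ℂ) ^ (n + 1) / ζ) / (1 - (ρ : ℂ) ^ (n + 1) / ζ))) := by
    rw [tsum_congr hterm, tsum_neg]
  rw [hts]
  have hζ1 : ζ - 1 ≠ 0 := sub_ne_zero.mpr h1
  have h1mζ : (1 : ℂ) - ζ ≠ 0 := fun h => h1 (by linear_combination -h)
  have hfront : ζ / (ζ - 1) + ζ⁻¹ / (ζ⁻¹ - 1) = 1 := by
    have e : ζ⁻¹ - 1 = ζ⁻¹ * (1 - ζ) := by
      rw [mul_sub, mul_one, inv_mul_cancel₀ h0]
    rw [e, ← div_div, div_self (inv_ne_zero h0), div_add_div _ _ hζ1 h1mζ,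
      div_eq_one_iff_eq (mul_ne_zero hζ1 h1mζ)]
    ring
  linear_combination hfront

lemma Kfun_neg_one (ρ : ℝ) : Kfun ρ (-1) = 1 / 2 := by
  unfold Kfun
  have hterm : ∀ n : ℕ,
      (-((ρ : ℂ) ^ (n + 1) * (-1)) / (1 - (ρ : ℂ) ^ (n + 1) * (-1))
        + ((ρ : ℂ) ^ (n + 1) / (-1)) / (1 - (ρ : ℂ) ^ (n + 1) / (-1))) = 0 := by
    intro n
    have e1 : (ρ : ℂ) ^ (n + 1) * (-1) = -((ρ : ℂ) ^ (n + 1)) := by ring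
    have e2 : (ρ : ℂ) ^ (n + 1) / (-1) = -((ρ : ℂ) ^ (n + 1)) := by
      rw [div_neg, div_one]
    rw [e1, e2]
    ring_nf
  rw [tsum_congr hterm, tsum_zero]
  norm_num

/-- Even polygon sum: for N = 2M and ν_n = r e^{2πi(n−1)/N},
Σ_{n=2}^{N} K(ν_1/ν_n) = (2M−1)/2. -/
theorem K_polygon_sum_even (ρ : ℝ) (hρ0 : 0 < ρ) (hρ1 : ρ < 1)
    (M : ℕ) (hM : 1 ≤ M) (r : ℝ) (hr : 0 < r) :
    let N := 2 * M
    let ν : ℕ → ℂ := fun n =>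
      (r : ℂ) * Complex.exp (2 * Real.pi * Complex.I * ((n : ℂ) - 1) / (N : ℂ))
    (∑ n ∈ Finset.Icc 2 N, Kfun ρ (ν 1 / ν n)) = ((2 * (M : ℂ) - 1) / 2) := by
  intro N ν
  have hN2 : 2 ≤ N := by omega
  have hN0 : (N : ℂ) ≠ 0 := by
    simp only [N]
    push_cast
    norm_num
    omega
  have hr0 : (r : ℂ) ≠ 0 := by
    exact_mod_cast ne_of_gt hr
  -- ζ n = exp(-(2πi(n-1)/N))
  have hζ : ∀ n : ℕ, ν 1 / ν n
      = Complex.exp (-(2 * Real.pi * Complex.I * ((n : ℂ) - 1) / (N : ℂ))) := by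
    intro n
    simp only [ν]
    rw [Complex.exp_neg]
    rw [show ((1 : ℕ) : ℂ) - 1 = 0 by norm_num]
    rw [show (2 * (Real.pi : ℂ) * Complex.I * 0 / (N : ℂ)) = 0 by ring]
    rw [Complex.exp_zero, mul_one, div_mul_eq_div_div, div_self hr0, one_div]
  have hζ0 : ∀ n : ℕ, ν 1 / ν n ≠ 0 := by
    intro n; rw [hζ n]; exact Complex.exp_ne_zero _
  -- ζ n ≠ 1 for n in [2, N]
  have hprim : IsPrimitiveRoot (Complex.exp (2 * Real.pi * Complex.I / (N : ℂ))) N :=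
    Complex.isPrimitiveRoot_exp N (by omega)
  have hζ1 : ∀ n ∈ Finset.Icc 2 N, ν 1 / ν n ≠ 1 := by
    intro n hn h1
    rw [Finset.mem_Icc] at hn
    rw [hζ n] at h1
    have hzpow : Complex.exp (-(2 * Real.pi * Complex.I * ((n : ℂ) - 1) / (N : ℂ)))
        = (Complex.exp (2 * Real.pi * Complex.I / (N : ℂ))) ^ (-((n : ℤ) - 1)) := by
      rw [← Complex.exp_int_mul]
      congr 1
      push_cast
      field_simp
    rw [hzpow] at h1
    have hdvd : (N : ℤ) ∣ -((n : ℤ) - 1) := hprim.zpow_eq_one_iff_dvd _ |>.mp h1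
    rw [Int.dvd_neg] at hdvd
    have hdvd' : (N : ℤ) ∣ ((n - 1 : ℕ) : ℤ) := by
      convert hdvd using 1
      push_cast [Nat.cast_sub (by omega : 1 ≤ n)]
      ring
    have : N ∣ (n - 1) := Int.ofNat_dvd.mp hdvd'
    have := Nat.le_of_dvd (by omega) this
    omega
  -- reflection: ζ (N+2-n) = (ζ n)⁻¹
  have hrefl : ∀ n ∈ Finset.Icc 2 N, ν 1 / ν (N + 2 - n) = (ν 1 / ν n)⁻¹ := by
    intro n hn
    rw [Finset.mem_Icc] at hn
    rw [hζ n, hζ (N + 2 - n), ← Complex.exp_neg, neg_neg]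
    have hcast : ((N + 2 - n : ℕ) : ℂ) = (N : ℂ) + 2 - (n : ℂ) := by
      push_cast [Nat.cast_sub (by omega : n ≤ N + 2)]
      ring
    rw [hcast]
    have : -(2 * (Real.pi : ℂ) * Complex.I * ((N : ℂ) + 2 - (n : ℂ) - 1) / (N : ℂ))
        = 2 * (Real.pi : ℂ) * Complex.I * ((n : ℂ) - 1) / (N : ℂ)
          + (-(2 * Real.pi * Complex.I)) := by
      field_simp
      ring
    rw [this, Complex.exp_add]
    rw [Complex.exp_neg, Complex.exp_two_pi_mul_I, inv_one, mul_one]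
  -- reindexing
  have hre : (∑ n ∈ Finset.Icc 2 N, Kfun ρ (ν 1 / ν n))
      = ∑ n ∈ Finset.Icc 2 N, Kfun ρ ((ν 1 / ν n)⁻¹) := by
    refine Finset.sum_nbij' (fun n => N + 2 - n) (fun n => N + 2 - n) ?_ ?_ ?_ ?_ ?_
    · intro a ha; simp only [Finset.mem_Icc] at ha ⊢; omega
    · intro a ha; simp only [Finset.mem_Icc] at ha ⊢; omega
    · intro a ha
      simp only [Finset.mem_Icc] at ha
      show N + 2 - (N + 2 - a) = a
      omega
    · intro a ha
      simp only [Finset.mem_Icc] at ha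
      show N + 2 - (N + 2 - a) = a
      omega
    · intro a ha
      show Kfun ρ (ν 1 / ν a) = Kfun ρ ((ν 1 / ν (N + 2 - a))⁻¹)
      rw [hrefl a ha, inv_inv]
  have hsum2 : (∑ n ∈ Finset.Icc 2 N, Kfun ρ (ν 1 / ν n))
      + (∑ n ∈ Finset.Icc 2 N, Kfun ρ (ν 1 / ν n)) = ((N : ℂ) - 1) := by
    nth_rewrite 2 [hre]
    rw [← Finset.sum_add_distrib]
    rw [Finset.sum_congr rfl (fun n hn => Kfun_add_inv ρ _ (hζ0 n) (hζ1 n hn))]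
    rw [Finset.sum_const, Nat.card_Icc]
    have hcard : N + 1 - 2 = N - 1 := by omega
    rw [hcard, nsmul_eq_mul, mul_one, Nat.cast_sub (by omega : 1 ≤ N), Nat.cast_one]
  have hNc : (N : ℂ) = 2 * (M : ℂ) := by simp only [N]; push_cast; ring
  rw [hNc] at hsum2
  linear_combination hsum2 / 2
end
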